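/- The minimum of the Kullback–Leibler divergence Σ_{m=1}^{N^K} p_m log(N^K p_m) over all feasible distributions p for the symmetric TSC scheme equals (1−(N−1)(D−1))·log((1−(N−1)(D−1))/N) + (N−1)(D−1)·log((N−1)(D−1)/(N^K−N)) + K·log N (with the convention 0·log 0 = 0), and this minimum is attained by p*. -/

import Mathlib

open Finset Real

/-- Download cost of option `m` (0-indexed: options `1,…,N` of the paper are `m < N`)
in the symmetric TSC scheme with `N` databases and `K` messages. -/
noncomputable def tscCost (N m : ℕ) : ℝ := if m < N then (N : ℝ) - 1 else (N : ℝ)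

/-- `p` is a feasible query distribution for the symmetric TSC scheme with expected
normalized download cost `D`. -/
def TSCFeasible (N K : ℕ) (D : ℝ) (p : ℕ → ℝ) : Prop :=
  (∀ m ∈ Finset.range (N ^ K), 0 ≤ p m) ∧
  (∑ m ∈ Finset.range (N ^ K), p m = 1) ∧
  (1 / ((N : ℝ) - 1)) * (∑ m ∈ Finset.range (N ^ K), p m * tscCost N m) = D

/-- The optimal distribution `p*` for the symmetric TSC scheme. -/
noncomputable def tscOpt (N K : ℕ) (D : ℝ) (m : ℕ) : ℝ :=
  if m < N then (1 - ((N : ℝ) - 1) * (D - 1)) / N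
  else ((N : ℝ) - 1) * (D - 1) / ((N : ℝ) ^ K - (N : ℝ))

/-- Download cost of option `m` (0-indexed) in the alternative PIR scheme with
message length `L`. -/
noncomputable def altCost (N L m : ℕ) : ℝ := if m < N then (L : ℝ) else (L : ℝ) + 1

/-- `p` is a feasible query distribution for the alternative PIR scheme
(`M = N (L+1)^(K-1)` options) with expected normalized download cost `D`. -/
def AltFeasible (N K L : ℕ) (D : ℝ) (p : ℕ → ℝ) : Prop :=
  (∀ m ∈ Finset.range (N * (L + 1) ^ (K - 1)), 0 ≤ p m) ∧
  (∑ m ∈ Finset.range (N * (L + 1) ^ (K - 1)), p m = 1) ∧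
  (1 / (L : ℝ)) * (∑ m ∈ Finset.range (N * (L + 1) ^ (K - 1)), p m * altCost N L m) = D

/-- The optimal distribution `q*` for the alternative PIR scheme. -/
noncomputable def altOpt (N K L : ℕ) (D : ℝ) (m : ℕ) : ℝ :=
  if m < N then (1 - (L : ℝ) * (D - 1)) / N
  else (L : ℝ) * (D - 1) / ((N : ℝ) * ((L : ℝ) + 1) ^ (K - 1) - (N : ℝ))

/-- Rényi divergence of order `α` (`0 < α`, `α ≠ 1`) of a distribution `p` on `M`
options from the uniform distribution on those options (natural logarithm). -/
noncomputable def renyiDiv (M : ℕ) (α : ℝ) (p : ℕ → ℝ) : ℝ :=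
  (1 / (α - 1)) * Real.log ((M : ℝ) ^ (α - 1) * ∑ m ∈ Finset.range M, p m ^ α)

/-- Kullback–Leibler divergence of a distribution `p` on `M` options from the uniform
distribution on those options (natural logarithm, with `0 · log 0 = 0`). -/
noncomputable def klDivUnif (M : ℕ) (p : ℕ → ℝ) : ℝ :=
  ∑ m ∈ Finset.range M, p m * Real.log ((M : ℝ) * p m)

/-- The maximum of `p` over the `M` options. -/
noncomputable def maxOver (M : ℕ) (hM : M ≠ 0) (p : ℕ → ℝ) : ℝ :=
  (Finset.range M).sup' (Finset.nonempty_range_iff.mpr hM) p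

/-! The feasibility constraints only see the total masses `1 - (N-1)(D-1)` and `(N-1)(D-1)` of
the two cost classes `{m < N}` and `{N ≤ m < N^K}`. Since `Σ pₘ = 1`, the divergence is
`K log N + Σ pₘ log pₘ`, and by Jensen's inequality for the convex function `x log x` the sum
`Σ pₘ log pₘ` over a class of `n` options with mass `a` is at least `a log (a / n)`, with
equality when `p` is uniform on the class; `p*` is uniform on both classes. -/

theorem sum_mul_log_div_card_le {ι : Type*} (s : Finset ι) {p : ι → ℝ}
    (hp : ∀ i ∈ s, 0 ≤ p i) :
    (∑ i ∈ s, p i) * log ((∑ i ∈ s, p i) / #s) ≤ ∑ i ∈ s, p i * log (p i) := by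
  rcases s.eq_empty_or_nonempty with rfl | hs
  · simp
  have hn : (0 : ℝ) < #s := by exact_mod_cast hs.card_pos
  have jensen := convexOn_mul_log.map_sum_le (t := s) (w := fun _ ↦ (#s : ℝ)⁻¹)
    (fun _ _ ↦ by positivity) (by simp [hn.ne']) hp
  simp only [smul_eq_mul] at jensen
  rw [← mul_sum, ← mul_sum, inv_mul_eq_div, inv_mul_eq_div] at jensen
  calc (∑ i ∈ s, p i) * log ((∑ i ∈ s, p i) / #s)
      = #s * ((∑ i ∈ s, p i) / #s * log ((∑ i ∈ s, p i) / #s)) := by field_simp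
    _ ≤ #s * ((∑ i ∈ s, p i * log (p i)) / #s) := by gcongr
    _ = ∑ i ∈ s, p i * log (p i) := by field_simp

theorem sum_of_eq_div_card {ι : Type*} {s : Finset ι} {p : ι → ℝ} {a : ℝ}
    (hs : s.Nonempty) (hp : ∀ i ∈ s, p i = a / #s) :
    ∑ i ∈ s, p i = a := by
  have hn : (#s : ℝ) ≠ 0 := by exact_mod_cast hs.card_pos.ne'
  rw [sum_congr rfl hp, sum_const, nsmul_eq_mul, mul_div_cancel₀ _ hn]

theorem sum_mul_log_of_eq_div_card {ι : Type*} {s : Finset ι} {p : ι → ℝ} {a : ℝ}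
    (hs : s.Nonempty) (hp : ∀ i ∈ s, p i = a / #s) :
    ∑ i ∈ s, p i * log (p i) = a * log (a / #s) := by
  rw [sum_congr rfl fun i hi ↦ by rw [hp i hi], ← sum_mul, sum_of_eq_div_card hs fun _ _ ↦ rfl]

theorem sub_one_mul_sum_inv_pow_le {x : ℝ} (hx : 1 ≤ x) (K : ℕ) :
    (x - 1) * ∑ k ∈ range K, (x ^ k)⁻¹ ≤ x := by
  have hx0 : x ≠ 0 := by positivity
  have hgeom : (x - 1) * ∑ k ∈ range K, (x ^ k)⁻¹ = x * (1 - x⁻¹ ^ K) := by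
    rw [← mul_neg_geom_sum]
    simp only [inv_pow]
    field_simp
  rw [hgeom]
  exact mul_le_of_le_one_right (by linarith) (by simp only [sub_le_self_iff]; positivity)

theorem cast_card_Ico {N M : ℕ} (h : N ≤ M) : (#(Ico N M) : ℝ) = M - N := by
  rw [Nat.card_Ico, Nat.cast_sub h]

theorem klDivUnif_eq_log_add_sum_mul_log {M : ℕ} {p : ℕ → ℝ}
    (hp : ∑ m ∈ range M, p m = 1) :
    klDivUnif M p = log M + ∑ m ∈ range M, p m * log (p m) := by
  have hM : (M : ℝ) ≠ 0 := by rintro h; simp [Nat.cast_eq_zero.mp h] at hp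
  have hterm : ∀ m ∈ range M, p m * log (M * p m) = p m * log M + p m * log (p m) := by
    intro m _
    rcases eq_or_ne (p m) 0 with h | h
    · simp [h]
    · rw [log_mul hM h]; ring
  rw [klDivUnif, sum_congr rfl hterm, sum_add_distrib, ← sum_mul, hp, one_mul]

section TSC

variable {N K : ℕ} {D : ℝ}

theorem sum_range_mul_tscCost {M : ℕ} (hNM : N ≤ M) (p : ℕ → ℝ) :
    ∑ m ∈ range M, p m * tscCost N m
      = (N - 1) * ∑ m ∈ range N, p m + N * ∑ m ∈ Ico N M, p m := by
  rw [← sum_range_add_sum_Ico _ hNM, mul_sum, mul_sum]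
  congr 1 <;> refine sum_congr rfl fun m hm ↦ ?_
  · rw [tscCost, if_pos (mem_range.mp hm), mul_comm]
  · rw [tscCost, if_neg (mem_Ico.mp hm).1.not_gt, mul_comm]

theorem tscFeasible_iff (hN : 2 ≤ N) (hK : K ≠ 0) {p : ℕ → ℝ} :
    TSCFeasible N K D p ↔ (∀ m ∈ range (N ^ K), 0 ≤ p m) ∧
      ∑ m ∈ range N, p m = 1 - (N - 1) * (D - 1) ∧
      ∑ m ∈ Ico N (N ^ K), p m = (N - 1) * (D - 1) := by
  have hNK : N ≤ N ^ K := Nat.le_self_pow hK N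
  have hN1 : (N : ℝ) - 1 ≠ 0 := by
    rw [sub_ne_zero]; exact_mod_cast (by omega : N ≠ 1)
  rw [TSCFeasible, sum_range_mul_tscCost hNK, ← sum_range_add_sum_Ico _ hNK]
  refine and_congr_right fun _ ↦ ?_
  generalize ∑ m ∈ range N, p m = a, ∑ m ∈ Ico N (N ^ K), p m = b
  constructor
  · rintro ⟨hsum, hcost⟩
    field_simp at hcost
    constructor
    · linear_combination (N : ℝ) * hsum - hcost
    · linear_combination hcost - ((N : ℝ) - 1) * hsum
  · rintro ⟨ha, hb⟩
    refine ⟨by linear_combination ha + hb, ?_⟩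
    field_simp
    linear_combination ((N : ℝ) - 1) * ha + N * hb

theorem tscOpt_of_lt {m : ℕ} (hm : m < N) :
    tscOpt N K D m = (1 - (N - 1) * (D - 1)) / #(range N) := by
  rw [tscOpt, if_pos hm, card_range]

theorem tscOpt_of_mem_Ico {m : ℕ} (hm : m ∈ Ico N (N ^ K)) :
    tscOpt N K D m = (N - 1) * (D - 1) / #(Ico N (N ^ K)) := by
  obtain ⟨hNm, hmK⟩ := mem_Ico.mp hm
  rw [tscOpt, if_neg hNm.not_gt, cast_card_Ico (hNm.trans hmK.le), Nat.cast_pow]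

theorem tscFeasible_tscOpt (hN : 2 ≤ N) (hK : 2 ≤ K) (hD1 : 1 ≤ D)
    (hD2 : D ≤ ∑ k ∈ range K, ((N : ℝ) ^ k)⁻¹) : TSCFeasible N K D (tscOpt N K D) := by
  have hN1 : (1 : ℝ) ≤ N := by exact_mod_cast (by omega : 1 ≤ N)
  have hB : 0 ≤ ((N : ℝ) - 1) * (D - 1) := mul_nonneg (by linarith) (by linarith)
  have hA : 0 ≤ 1 - ((N : ℝ) - 1) * (D - 1) := by
    nlinarith [sub_one_mul_sum_inv_pow_le hN1 K]
  refine (tscFeasible_iff hN (by omega)).mpr ⟨fun m hm ↦ ?_,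
    sum_of_eq_div_card (nonempty_range_iff.mpr (by omega)) fun m hm ↦
      tscOpt_of_lt (mem_range.mp hm),
    sum_of_eq_div_card (nonempty_Ico.mpr (lt_self_pow₀ (by omega) (by omega))) fun m hm ↦
      tscOpt_of_mem_Ico hm⟩
  rcases lt_or_ge m N with hmN | hmN
  · rw [tscOpt_of_lt hmN]; positivity
  · rw [tscOpt_of_mem_Ico (mem_Ico.mpr ⟨hmN, mem_range.mp hm⟩)]; positivity

theorem klDivUnif_eq_sum_mul_log_add (hK : K ≠ 0) {p : ℕ → ℝ}
    (hp : ∑ m ∈ range (N ^ K), p m = 1) :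
    klDivUnif (N ^ K) p = ∑ m ∈ range N, p m * log (p m) +
      ∑ m ∈ Ico N (N ^ K), p m * log (p m) + K * log N := by
  rw [klDivUnif_eq_log_add_sum_mul_log hp, Nat.cast_pow, log_pow,
    sum_range_add_sum_Ico _ (Nat.le_self_pow hK N), add_comm]

end TSC

/-- the minimum of the KL divergence `∑ pₘ log (N^K pₘ)` over feasible
distributions of the symmetric TSC scheme equals
`(1-(N-1)(D-1)) log((1-(N-1)(D-1))/N) + (N-1)(D-1) log((N-1)(D-1)/(N^K-N)) + K log N`,
attained by `p*`. -/
theorem tsc_kl_tradeoff (N K : ℕ) (hN : 2 ≤ N) (hK : 2 ≤ K) (D : ℝ)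
    (hD1 : 1 ≤ D) (hD2 : D ≤ ∑ k ∈ Finset.range K, ((N : ℝ) ^ k)⁻¹) :
    TSCFeasible N K D (tscOpt N K D) ∧
    (∀ p : ℕ → ℝ, TSCFeasible N K D p →
      (1 - ((N : ℝ) - 1) * (D - 1)) * Real.log ((1 - ((N : ℝ) - 1) * (D - 1)) / N) +
        ((N : ℝ) - 1) * (D - 1) * Real.log (((N : ℝ) - 1) * (D - 1) / ((N : ℝ) ^ K - N)) +
        (K : ℝ) * Real.log N ≤ klDivUnif (N ^ K) p) ∧
    klDivUnif (N ^ K) (tscOpt N K D) =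
      (1 - ((N : ℝ) - 1) * (D - 1)) * Real.log ((1 - ((N : ℝ) - 1) * (D - 1)) / N) +
        ((N : ℝ) - 1) * (D - 1) * Real.log (((N : ℝ) - 1) * (D - 1) / ((N : ℝ) ^ K - N)) +
        (K : ℝ) * Real.log N := by
  have hK0 : K ≠ 0 := by omega
  have hNK : N < N ^ K := lt_self_pow₀ (by omega) (by omega)
  have hlow : (range N).Nonempty := nonempty_range_iff.mpr (by omega)
  have hhigh : (Ico N (N ^ K)).Nonempty := nonempty_Ico.mpr hNK
  have hcard : (#(Ico N (N ^ K)) : ℝ) = N ^ K - N := by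
    rw [cast_card_Ico hNK.le, Nat.cast_pow]
  have hopt := tscFeasible_tscOpt hN hK hD1 hD2
  refine ⟨hopt, fun p hp ↦ ?_, ?_⟩
  · obtain ⟨hp0, hlow_sum, hhigh_sum⟩ := (tscFeasible_iff hN hK0).mp hp
    have hlow_le := sum_mul_log_div_card_le (range N) fun m hm ↦
      hp0 m (range_subset_range.mpr hNK.le hm)
    have hhigh_le := sum_mul_log_div_card_le (Ico N (N ^ K)) fun m hm ↦
      hp0 m (mem_range.mpr (mem_Ico.mp hm).2)
    rw [hlow_sum, card_range] at hlow_le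
    rw [hhigh_sum, hcard] at hhigh_le
    rw [klDivUnif_eq_sum_mul_log_add hK0 hp.2.1]
    linarith
  · rw [klDivUnif_eq_sum_mul_log_add hK0 hopt.2.1,
      sum_mul_log_of_eq_div_card hlow fun m hm ↦ tscOpt_of_lt (mem_range.mp hm),
      sum_mul_log_of_eq_div_card hhigh fun m hm ↦ tscOpt_of_mem_Ico hm, card_range, hcard]
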